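/- Let P ⊆ ℝ^d_+ be a nonempty convex lower comprehensive set contained in [0,1]^d, i.e., x ∈ P, 0 ≤ y ≤ x implies y ∈ P. Then N(P) and N_+(P) are lower comprehensive. Concretely: if x ∈ N(P) (resp. N_+(P)) and j is such that x_j > 0, then x − x_j e_j ∈ N(P) (resp. N_+(P)). -/

import Mathlib

def LSM (d : ℕ) (K : Set (Fin (d + 1) → ℝ)) : Set (Matrix (Fin (d + 1)) (Fin (d + 1)) ℝ) :=
  {Y | Y.IsSymm ∧ Y.mulVec (Pi.single 0 1) = Matrix.diag Y ∧
    ∀ i : Fin d, Y.mulVec (Pi.single i.succ 1) ∈ K ∧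
      Y.mulVec (Pi.single 0 1 - Pi.single i.succ 1) ∈ K}

def LSMplus (d : ℕ) (K : Set (Fin (d + 1) → ℝ)) :
    Set (Matrix (Fin (d + 1)) (Fin (d + 1)) ℝ) :=
  {Y | Y ∈ LSM d K ∧ Y.PosSemidef}

def homog (d : ℕ) (P : Set (Fin d → ℝ)) : Set (Fin (d + 1) → ℝ) :=
  {y | ∃ (l : ℝ) (x : Fin d → ℝ), 0 ≤ l ∧ x ∈ P ∧ y = l • (Fin.cons 1 x : Fin (d + 1) → ℝ)}

def NP (d : ℕ) (P : Set (Fin d → ℝ)) : Set (Fin d → ℝ) :=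
  {x | ∃ Y ∈ LSM d (homog d P), Matrix.diag Y = Fin.cons 1 x}

def NPplus (d : ℕ) (P : Set (Fin d → ℝ)) : Set (Fin d → ℝ) :=
  {x | ∃ Y ∈ LSMplus d (homog d P), Matrix.diag Y = Fin.cons 1 x}

/-!
Pass from a lifting matrix `Y` of `x` to `D * Y * D`, where `D` is the diagonal projection
killing coordinate `j`: this is again symmetric (and positive semidefinite if `Y` is), and its
diagonal is `x` with `x j` replaced by `0`. Its columns `D Y eᵢ` and `D Y (e₀ - eᵢ)` for `i ≠ j`
are the corresponding columns of `Y` with their `j`-th entry zeroed, which stay in the cone `K`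
over `P` because `P` is lower comprehensive. For `i = j` the two columns are `0` and `D Y e₀`,
and `Y e₀ = Y eⱼ + Y (e₀ - eⱼ)` lies in `K` because `K` is a convex cone.
-/

open Function

namespace Matrix

variable {n R : Type*} [Fintype n] [DecidableEq n] [CommRing R]

def zeroRowCol (k : n) (Y : Matrix n n R) : Matrix n n R :=
  diagonal (update 1 k 0) * Y * diagonal (update 1 k 0)

lemma diagonal_update_one_mulVec (k : n) (w : n → R) :
    diagonal (update 1 k 0) *ᵥ w = update w k 0 := by
  ext i
  rcases eq_or_ne i k with rfl | h <;> simp [mulVec_diagonal, *]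

lemma zeroRowCol_mulVec (k : n) (Y : Matrix n n R) (v : n → R) :
    zeroRowCol k Y *ᵥ v = update (Y *ᵥ update v k 0) k 0 := by
  simp only [zeroRowCol, ← mulVec_mulVec, diagonal_update_one_mulVec]

lemma zeroRowCol_mulVec_of_apply_eq_zero {k : n} (Y : Matrix n n R) {v : n → R} (hv : v k = 0) :
    zeroRowCol k Y *ᵥ v = update (Y *ᵥ v) k 0 := by
  rw [zeroRowCol_mulVec, (update_eq_self_iff (f := v)).mpr hv.symm]

lemma diag_zeroRowCol (k : n) (Y : Matrix n n R) :
    diag (zeroRowCol k Y) = update (diag Y) k 0 := by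
  ext i
  rcases eq_or_ne i k with rfl | h <;> simp [zeroRowCol, diagonal_mul, mul_diagonal, *]

lemma IsSymm.zeroRowCol {Y : Matrix n n R} (hY : Y.IsSymm) (k : n) : (zeroRowCol k Y).IsSymm := by
  rw [Matrix.zeroRowCol, IsSymm, transpose_mul, transpose_mul, diagonal_transpose, hY.eq,
    Matrix.mul_assoc]

open scoped ComplexOrder in
lemma PosSemidef.zeroRowCol {𝕜 : Type*} [RCLike 𝕜] {Y : Matrix n n 𝕜} (hY : Y.PosSemidef)
    (k : n) : (zeroRowCol k Y).PosSemidef := by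
  simpa [Matrix.zeroRowCol, diagonal_conjTranspose, ← update_star, star_one, star_zero] using
    hY.mul_mul_conjTranspose_same (diagonal (update 1 k 0))

end Matrix

open Matrix

section Homog

variable {d : ℕ} {P : Set (Fin d → ℝ)}

lemma zero_mem_homog (hne : P.Nonempty) : (0 : Fin (d + 1) → ℝ) ∈ homog d P :=
  let ⟨x, hx⟩ := hne
  ⟨0, x, le_rfl, hx, (zero_smul ℝ _).symm⟩

lemma add_mem_homog (hPconv : Convex ℝ P) {v w : Fin (d + 1) → ℝ}
    (hv : v ∈ homog d P) (hw : w ∈ homog d P) : v + w ∈ homog d P := by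
  obtain ⟨a, x, ha, hx, rfl⟩ := hv
  obtain ⟨b, y, hb, hy, rfl⟩ := hw
  rcases (add_nonneg ha hb).eq_or_lt with hab | hab
  · obtain ⟨rfl, rfl⟩ : a = 0 ∧ b = 0 := ⟨by linarith, by linarith⟩
    exact ⟨0, x, le_rfl, hx, by simp⟩
  · refine ⟨a + b, (a / (a + b)) • x + (b / (a + b)) • y, hab.le,
      hPconv hx hy (by positivity) (by positivity) (by field_simp), ?_⟩
    ext k
    induction k using Fin.cases with
    | zero => simp
    | succ i =>
      simp only [Pi.add_apply, Pi.smul_apply, Fin.cons_succ, smul_eq_mul]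
      field_simp

lemma update_mem_of_lowerComprehensive
    (hPnonneg : ∀ x ∈ P, ∀ i, 0 ≤ x i)
    (hlc : ∀ x ∈ P, ∀ y : Fin d → ℝ, (∀ i, 0 ≤ y i) → (∀ i, y i ≤ x i) → y ∈ P)
    {x : Fin d → ℝ} (hx : x ∈ P) (j : Fin d) : update x j 0 ∈ P := by
  refine hlc x hx _ (fun i => ?_) (fun i => ?_) <;>
  rcases eq_or_ne i j with rfl | h <;> simp [*, hPnonneg x hx i]

lemma update_succ_mem_homog
    (hPnonneg : ∀ x ∈ P, ∀ i, 0 ≤ x i)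
    (hlc : ∀ x ∈ P, ∀ y : Fin d → ℝ, (∀ i, 0 ≤ y i) → (∀ i, y i ≤ x i) → y ∈ P)
    {v : Fin (d + 1) → ℝ} (hv : v ∈ homog d P) (j : Fin d) :
    update v j.succ 0 ∈ homog d P := by
  obtain ⟨l, x, hl, hx, rfl⟩ := hv
  refine ⟨l, update x j 0, hl, update_mem_of_lowerComprehensive hPnonneg hlc hx j, ?_⟩
  rw [Fin.cons_update, ← update_smul, smul_zero]

end Homog

lemma zeroRowCol_mem_LSM {d : ℕ} {K : Set (Fin (d + 1) → ℝ)} (hK0 : 0 ∈ K)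
    (hKadd : ∀ v ∈ K, ∀ w ∈ K, v + w ∈ K) {j : Fin d}
    (hKupd : ∀ v ∈ K, update v j.succ 0 ∈ K) {Y : Matrix (Fin (d + 1)) (Fin (d + 1)) ℝ}
    (hY : Y ∈ LSM d K) : zeroRowCol j.succ Y ∈ LSM d K := by
  obtain ⟨hsymm, hcol0, hcols⟩ := hY
  have hsingle0 : (Pi.single 0 1 : Fin (d + 1) → ℝ) j.succ = 0 :=
    Pi.single_eq_of_ne (Fin.succ_ne_zero j) 1
  refine ⟨hsymm.zeroRowCol _, ?_, fun i => ?_⟩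
  · rw [zeroRowCol_mulVec_of_apply_eq_zero Y hsingle0, hcol0, diag_zeroRowCol]
  rcases eq_or_ne i j with rfl | hij
  · have hcol0K : Y *ᵥ Pi.single 0 1 ∈ K := by
      have := hKadd _ (hcols i).1 _ (hcols i).2
      rwa [← mulVec_add, add_sub_cancel] at this
    have hkill : update (Pi.single i.succ 1 : Fin (d + 1) → ℝ) i.succ 0 = 0 := by
      rw [Pi.single, update_idem, update_eq_self_iff]; rfl
    have hkeep : update (Pi.single 0 1 - Pi.single i.succ 1 : Fin (d + 1) → ℝ) i.succ 0 =
        Pi.single 0 1 := by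
      ext k; rcases eq_or_ne k i.succ with rfl | hk <;> simp [*]
    refine ⟨?_, ?_⟩
    · rw [zeroRowCol_mulVec, hkill, mulVec_zero]
      exact hKupd _ hK0
    · rw [zeroRowCol_mulVec, hkeep]
      exact hKupd _ hcol0K
  · have hne : (Pi.single i.succ 1 : Fin (d + 1) → ℝ) j.succ = 0 :=
      Pi.single_eq_of_ne' (by simpa using hij) 1
    refine ⟨?_, ?_⟩
    · rw [zeroRowCol_mulVec_of_apply_eq_zero Y hne]
      exact hKupd _ (hcols i).1
    · rw [zeroRowCol_mulVec_of_apply_eq_zero Y (by simp [hne])]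
      exact hKupd _ (hcols i).2

lemma diag_zeroRowCol_succ {d : ℕ} {Y : Matrix (Fin (d + 1)) (Fin (d + 1)) ℝ} {x : Fin d → ℝ}
    (hY : diag Y = Fin.cons 1 x) (j : Fin d) :
    diag (zeroRowCol j.succ Y) = Fin.cons 1 (update x j 0) := by
  rw [diag_zeroRowCol, hY, Fin.cons_update]

theorem stmt19 (d : ℕ) (P : Set (Fin d → ℝ)) (hne : P.Nonempty)
    (hPconv : Convex ℝ P) (hPbox : ∀ x ∈ P, ∀ i, 0 ≤ x i ∧ x i ≤ 1)
    (hlc : ∀ x ∈ P, ∀ y : Fin d → ℝ, (∀ i, 0 ≤ y i) → (∀ i, y i ≤ x i) → y ∈ P) :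
    (∀ x ∈ NP d P, ∀ j : Fin d, 0 < x j → Function.update x j 0 ∈ NP d P) ∧
    (∀ x ∈ NPplus d P, ∀ j : Fin d, 0 < x j → Function.update x j 0 ∈ NPplus d P) := by
  have hLSM : ∀ {Y} (j : Fin d),
      Y ∈ LSM d (homog d P) → zeroRowCol j.succ Y ∈ LSM d (homog d P) :=
    fun j => zeroRowCol_mem_LSM (zero_mem_homog hne) (fun _ hv _ hw => add_mem_homog hPconv hv hw)
      (fun _ hv => update_succ_mem_homog (fun x hx i => (hPbox x hx i).1) hlc hv j)
  refine ⟨?_, ?_⟩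
  · rintro x ⟨Y, hY, hdiag⟩ j -
    exact ⟨_, hLSM j hY, diag_zeroRowCol_succ hdiag j⟩
  · rintro x ⟨Y, ⟨hY, hpsd⟩, hdiag⟩ j -
    exact ⟨_, ⟨hLSM j hY, hpsd.zeroRowCol _⟩, diag_zeroRowCol_succ hdiag j⟩
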